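/- arXiv:2512.04430 — 2 statements merged into one kernel-verified Lean document; each statement's English description precedes it below -/
import Mathlib

section
/- Let V, A be n×n complex matrices and let f : ℝ → ℂⁿ be a smooth 2π-periodic function. Define H(k) = V + e^{ik}A + e^{-ik}A* and, for x ∈ ℤ, the Fourier coefficients ψ(x) = (1/2π)∫_0^{2π} e^{ixk} f(k) dk. Then for every x ∈ ℤ, x·Vψ(x) + (x+1)·Aψ(x+1) + x·A*ψ(x−1) = (1/2π)∫_0^{2π} e^{ixk} ( i·H(k)·f'(k) + e^{-ik}A*·f(k) ) dk. -/
open Matrix Complex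

section Aux

variable {n : ℕ}

noncomputable def mvCLM (M : Matrix (Fin n) (Fin n) ℂ) : (Fin n → ℂ) →L[ℂ] (Fin n → ℂ) :=
  LinearMap.toContinuousLinearMap M.mulVecLin

lemma mvCLM_apply (M : Matrix (Fin n) (Fin n) ℂ) (v : Fin n → ℂ) : mvCLM M v = M *ᵥ v := rfl

lemma hasDerivAt_mulVec (M : Matrix (Fin n) (Fin n) ℂ) {f : ℝ → Fin n → ℂ} {f' : Fin n → ℂ}
    {k : ℝ} (hf : HasDerivAt f f' k) :
    HasDerivAt (fun k : ℝ => M *ᵥ f k) (M *ᵥ f') k := by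
  have h := (((mvCLM M).restrictScalars ℝ).hasFDerivAt (x := f k)).comp_hasDerivAt k hf
  simpa [Function.comp_def, mvCLM_apply] using h

lemma deriv_mulVec (M : Matrix (Fin n) (Fin n) ℂ) {f : ℝ → Fin n → ℂ}
    (hf : ContDiff ℝ (⊤ : ℕ∞) f) (k : ℝ) :
    deriv (fun k : ℝ => M *ᵥ f k) k = M *ᵥ deriv f k :=
  (hasDerivAt_mulVec M ((hf.differentiable (by simp) k).hasDerivAt)).deriv

lemma exp_deriv (c : ℂ) (k : ℝ) :
    HasDerivAt (fun k : ℝ => Complex.exp (Complex.I * c * k))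
      (Complex.I * c * Complex.exp (Complex.I * c * k)) k := by
  have h : HasDerivAt (fun k : ℝ => Complex.I * c * (k : ℂ)) (Complex.I * c) k := by
    simpa using (Complex.ofRealCLM.hasDerivAt (x := k)).const_mul (Complex.I * c)
  simpa [mul_comm] using h.cexp

/-- Integration by parts on the circle. -/
lemma parts (g : ℝ → Fin n → ℂ) (hg : ContDiff ℝ (⊤ : ℕ∞) g) (hper : g (2 * Real.pi) = g 0) (c : ℤ) :
    ∫ k in (0:ℝ)..(2 * Real.pi), Complex.exp (Complex.I * c * k) • (Complex.I • deriv g k)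
      = (c : ℂ) • ∫ k in (0:ℝ)..(2 * Real.pi), Complex.exp (Complex.I * c * k) • g k := by
  have hg' : Continuous (deriv g) := hg.continuous_deriv (by simp)
  have hgc : Continuous g := hg.continuous
  have hcontexp : Continuous fun k : ℝ => Complex.exp (Complex.I * c * k) := by fun_prop
  have hF : ∀ k ∈ Set.uIcc (0:ℝ) (2 * Real.pi),
      HasDerivAt (fun k : ℝ => Complex.exp (Complex.I * c * k) • g k)
        (Complex.exp (Complex.I * c * k) • deriv g k
          + (Complex.I * c * Complex.exp (Complex.I * c * k)) • g k) k := by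
    intro k _
    exact (exp_deriv c k).smul ((hg.differentiable (by simp) k).hasDerivAt)
  have hint1 : IntervalIntegrable (fun k : ℝ => Complex.exp (Complex.I * c * k) • deriv g k)
      MeasureTheory.volume 0 (2 * Real.pi) := (hcontexp.smul hg').intervalIntegrable _ _
  have hint2 : IntervalIntegrable
      (fun k : ℝ => (Complex.I * c * Complex.exp (Complex.I * c * k)) • g k)
      MeasureTheory.volume 0 (2 * Real.pi) :=
    ((continuous_const.mul hcontexp).smul hgc).intervalIntegrable _ _
  have hsub := intervalIntegral.integral_eq_sub_of_hasDerivAt hF (hint1.add hint2)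
  rw [intervalIntegral.integral_add hint1 hint2] at hsub
  have hone : Complex.exp (Complex.I * c * ((2 * Real.pi : ℝ) : ℂ)) = 1 := by
    push_cast
    rw [show Complex.I * c * (2 * Real.pi) = (c : ℂ) * (2 * Real.pi * Complex.I) by ring]
    exact Complex.exp_int_mul_two_pi_mul_I c
  have hzero : (Complex.exp (Complex.I * c * ((2 * Real.pi : ℝ) : ℂ)) • g (2 * Real.pi))
      - Complex.exp (Complex.I * c * ((0:ℝ) : ℂ)) • g 0 = 0 := by
    rw [hone, hper]; simp
  rw [hzero] at hsub
  have hAB : (∫ k in (0:ℝ)..(2 * Real.pi), Complex.exp (Complex.I * c * k) • deriv g k)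
      = -∫ k in (0:ℝ)..(2 * Real.pi), (Complex.I * c * Complex.exp (Complex.I * c * k)) • g k :=
    eq_neg_of_add_eq_zero_left hsub
  have hcomm : ∀ k : ℝ, Complex.exp (Complex.I * c * k) • (Complex.I • deriv g k)
      = Complex.I • (Complex.exp (Complex.I * c * k) • deriv g k) := fun k => smul_comm _ _ _
  have hmul : ∀ k : ℝ, (Complex.I * c * Complex.exp (Complex.I * c * k)) • g k
      = (Complex.I * c) • (Complex.exp (Complex.I * c * k) • g k) := fun k => mul_smul _ _ _
  calc (∫ k in (0:ℝ)..(2 * Real.pi), Complex.exp (Complex.I * c * k) • (Complex.I • deriv g k))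
      = ∫ k in (0:ℝ)..(2 * Real.pi),
          Complex.I • (Complex.exp (Complex.I * c * k) • deriv g k) := by simp only [hcomm]
    _ = Complex.I • ∫ k in (0:ℝ)..(2 * Real.pi),
          Complex.exp (Complex.I * c * k) • deriv g k := intervalIntegral.integral_smul _ _
    _ = Complex.I • -∫ k in (0:ℝ)..(2 * Real.pi),
          (Complex.I * c * Complex.exp (Complex.I * c * k)) • g k := by rw [hAB]
    _ = Complex.I • -((Complex.I * c) •
          ∫ k in (0:ℝ)..(2 * Real.pi), Complex.exp (Complex.I * c * k) • g k) := by
        simp only [hmul]; rw [intervalIntegral.integral_smul]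
    _ = (c : ℂ) • ∫ k in (0:ℝ)..(2 * Real.pi), Complex.exp (Complex.I * c * k) • g k := by
        rw [← neg_smul, smul_smul]
        congr 1
        rw [mul_neg, ← mul_assoc, Complex.I_mul_I]
        ring

end Aux

/-- The distance-modulated Hamiltonian `H̃ = Σ_x x·H_x`, acting in position space by
`(H̃ψ)(x) = x·Vψ(x) + (x+1)·Aψ(x+1) + x·A*ψ(x−1)`, is carried by the Fourier transform to the
first-order differential operator `i·H(k)·d/dk + A*e^{-ik}`. -/
theorem modulated_hamiltonian_fourier (n : ℕ) (V A : Matrix (Fin n) (Fin n) ℂ)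
    (f : ℝ → Fin n → ℂ) (hf : ContDiff ℝ (⊤ : ℕ∞) f) (hper : ∀ k : ℝ, f (k + 2 * Real.pi) = f k)
    (H : ℝ → Matrix (Fin n) (Fin n) ℂ)
    (hH : ∀ k : ℝ, H k = V + Complex.exp (Complex.I * k) • A
      + Complex.exp (-(Complex.I * k)) • Aᴴ)
    (ψ : ℤ → Fin n → ℂ)
    (hψ : ∀ x : ℤ, ψ x = (1 / (2 * (Real.pi : ℂ))) •
      ∫ k in (0 : ℝ)..(2 * Real.pi), Complex.exp (Complex.I * x * k) • f k) :
    ∀ x : ℤ,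
      (x : ℂ) • (V *ᵥ ψ x) + ((x : ℂ) + 1) • (A *ᵥ ψ (x + 1)) + (x : ℂ) • (Aᴴ *ᵥ ψ (x - 1))
        = (1 / (2 * (Real.pi : ℂ))) •
            ∫ k in (0 : ℝ)..(2 * Real.pi), Complex.exp (Complex.I * x * k) •
              (Complex.I • (H k *ᵥ deriv f k)
                + Complex.exp (-(Complex.I * k)) • (Aᴴ *ᵥ f k)) := by
  intro x
  have hp0 : f (2 * Real.pi) = f 0 := by simpa using hper 0
  have hfc : Continuous f := hf.continuous
  have smoothM : ∀ M : Matrix (Fin n) (Fin n) ℂ, ContDiff ℝ (⊤ : ℕ∞) fun k : ℝ => M *ᵥ f k :=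
    fun M => (((mvCLM M).restrictScalars ℝ).contDiff).comp hf
  have perM : ∀ M : Matrix (Fin n) (Fin n) ℂ,
      (fun k : ℝ => M *ᵥ f k) (2 * Real.pi) = (fun k : ℝ => M *ᵥ f k) 0 := by
    intro M; simp [hp0]
  have hder : ∀ (M : Matrix (Fin n) (Fin n) ℂ) (k : ℝ),
      deriv (fun k : ℝ => M *ᵥ f k) k = M *ᵥ deriv f k := fun M k => deriv_mulVec M hf k
  have hcontexp : ∀ c : ℂ, Continuous fun k : ℝ => Complex.exp (Complex.I * c * k) := by
    intro c; fun_prop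
  have hcontder : ∀ M : Matrix (Fin n) (Fin n) ℂ,
      Continuous (deriv fun k : ℝ => M *ᵥ f k) := fun M => (smoothM M).continuous_deriv (by simp)
  -- pointwise decomposition of the integrand
  have hpt : ∀ k : ℝ,
      Complex.exp (Complex.I * x * k) • (Complex.I • (H k *ᵥ deriv f k)
        + Complex.exp (-(Complex.I * k)) • (Aᴴ *ᵥ f k))
      = Complex.exp (Complex.I * (x : ℂ) * k) • (Complex.I • deriv (fun k : ℝ => V *ᵥ f k) k)
      + Complex.exp (Complex.I * ((x + 1 : ℤ) : ℂ) * k) •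
          (Complex.I • deriv (fun k : ℝ => A *ᵥ f k) k)
      + (Complex.exp (Complex.I * ((x - 1 : ℤ) : ℂ) * k) •
          (Complex.I • deriv (fun k : ℝ => Aᴴ *ᵥ f k) k)
        + Complex.exp (Complex.I * ((x - 1 : ℤ) : ℂ) * k) • (Aᴴ *ᵥ f k)) := by
    intro k
    have hE1 : Complex.exp (Complex.I * ((x + 1 : ℤ) : ℂ) * k)
        = Complex.exp (Complex.I * x * k) * Complex.exp (Complex.I * k) := by
      rw [← Complex.exp_add]; congr 1; push_cast; ring
    have hE2 : Complex.exp (Complex.I * ((x - 1 : ℤ) : ℂ) * k)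
        = Complex.exp (Complex.I * x * k) * Complex.exp (-(Complex.I * k)) := by
      rw [← Complex.exp_add]; congr 1; push_cast; ring
    rw [hH k, hder V, hder A, hder Aᴴ, hE1, hE2]
    simp only [Matrix.add_mulVec, Matrix.smul_mulVec, smul_add, smul_smul]
    module
  -- integrability of the four pieces
  have hi1 : IntervalIntegrable (fun k : ℝ => Complex.exp (Complex.I * (x : ℂ) * k) •
      (Complex.I • deriv (fun k : ℝ => V *ᵥ f k) k)) MeasureTheory.volume 0 (2 * Real.pi) :=
    by apply Continuous.intervalIntegrable; have := hcontder V; fun_prop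
  have hi2 : IntervalIntegrable (fun k : ℝ => Complex.exp (Complex.I * ((x + 1 : ℤ) : ℂ) * k) •
      (Complex.I • deriv (fun k : ℝ => A *ᵥ f k) k)) MeasureTheory.volume 0 (2 * Real.pi) :=
    by apply Continuous.intervalIntegrable; have := hcontder A; fun_prop
  have hi3 : IntervalIntegrable (fun k : ℝ => Complex.exp (Complex.I * ((x - 1 : ℤ) : ℂ) * k) •
      (Complex.I • deriv (fun k : ℝ => Aᴴ *ᵥ f k) k)) MeasureTheory.volume 0 (2 * Real.pi) :=
    by apply Continuous.intervalIntegrable; have := hcontder Aᴴ; fun_prop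
  have hi4 : IntervalIntegrable (fun k : ℝ => Complex.exp (Complex.I * ((x - 1 : ℤ) : ℂ) * k) •
      (Aᴴ *ᵥ f k)) MeasureTheory.volume 0 (2 * Real.pi) :=
    by apply Continuous.intervalIntegrable; exact (hcontexp _).smul ((((mvCLM Aᴴ).restrictScalars ℝ).continuous).comp hfc)
  -- pull the matrix out of the integral
  have pullCLM : ∀ (c : ℂ) (M : Matrix (Fin n) (Fin n) ℂ),
      (∫ k in (0:ℝ)..(2 * Real.pi), Complex.exp (Complex.I * c * k) • (M *ᵥ f k))
        = M *ᵥ ∫ k in (0:ℝ)..(2 * Real.pi), Complex.exp (Complex.I * c * k) • f k := by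
    intro c M
    have hint : IntervalIntegrable (fun k : ℝ => Complex.exp (Complex.I * c * k) • f k)
        MeasureTheory.volume 0 (2 * Real.pi) := ((hcontexp c).smul hfc).intervalIntegrable _ _
    have h := (mvCLM M).intervalIntegral_comp_comm hint
    simp only [ContinuousLinearMap.map_smul, mvCLM_apply] at h
    exact h
  -- evaluate the derivative pieces via integration by parts
  have T : ∀ (c : ℤ) (M : Matrix (Fin n) (Fin n) ℂ),
      (∫ k in (0:ℝ)..(2 * Real.pi), Complex.exp (Complex.I * (c : ℂ) * k) •
          (Complex.I • deriv (fun k : ℝ => M *ᵥ f k) k))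
        = (c : ℂ) • (M *ᵥ ∫ k in (0:ℝ)..(2 * Real.pi),
            Complex.exp (Complex.I * (c : ℂ) * k) • f k) := by
    intro c M
    rw [parts (fun k : ℝ => M *ᵥ f k) (smoothM M) (perM M) c, pullCLM]
  have hsplit : (∫ k in (0 : ℝ)..(2 * Real.pi), Complex.exp (Complex.I * x * k) •
        (Complex.I • (H k *ᵥ deriv f k) + Complex.exp (-(Complex.I * k)) • (Aᴴ *ᵥ f k)))
      = (x : ℂ) • (V *ᵥ ∫ k in (0:ℝ)..(2 * Real.pi),
            Complex.exp (Complex.I * (x : ℂ) * k) • f k)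
        + ((x + 1 : ℤ) : ℂ) • (A *ᵥ ∫ k in (0:ℝ)..(2 * Real.pi),
            Complex.exp (Complex.I * ((x + 1 : ℤ) : ℂ) * k) • f k)
        + (((x - 1 : ℤ) : ℂ) • (Aᴴ *ᵥ ∫ k in (0:ℝ)..(2 * Real.pi),
            Complex.exp (Complex.I * ((x - 1 : ℤ) : ℂ) * k) • f k)
          + Aᴴ *ᵥ ∫ k in (0:ℝ)..(2 * Real.pi),
            Complex.exp (Complex.I * ((x - 1 : ℤ) : ℂ) * k) • f k) := by
    rw [intervalIntegral.integral_congr (fun k _ => hpt k)]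
    rw [intervalIntegral.integral_add (hi1.add hi2) (hi3.add hi4),
      intervalIntegral.integral_add hi1 hi2, intervalIntegral.integral_add hi3 hi4]
    rw [T x V, T (x + 1) A, T (x - 1) Aᴴ, pullCLM ((x - 1 : ℤ) : ℂ) Aᴴ]
  rw [hsplit, hψ x, hψ (x + 1), hψ (x - 1)]
  simp only [Matrix.mulVec_smul]
  push_cast
  module
end

section
/- Let U_1, U_2, H_1, H_2 : [0, T] → M_n(ℂ) with H_1, H_2 continuous, U_1, U_2 differentiable, U_i(0) = I, U_i'(t) = −i·H_i(t)·U_i(t) for i = 1, 2, and suppose ‖U_1(t)‖ ≤ K, ‖U_2(t)‖ ≤ K, ‖H_1(t)‖ ≤ K and ‖H_2(t)‖ ≤ K for all t ∈ [0, T]. Define S(t) = ∫_0^t (H_1(s)† − H_2(s)) ds. Then there exists a constant C depending only on K and T such that ‖U_1(T)·U_1(T)†·U_2(T) − U_1(T)‖ ≤ C · sup_{t ∈ [0,T]} ‖S(t)‖. -/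
open Matrix
open scoped Matrix.Norms.L2Operator

/-!
The derivative of `U₁† U₂` is `i U₁† (H₁† - H₂) U₂ = i U₁† S' U₂`. Integrating by parts, the
corrected overlap `V = U₁† U₂ - i U₁† S U₂` satisfies `V(0) = I` and `V' = U₁† (H₁† S - S H₂) U₂`,
whose norm is `O(sup ‖S‖)`; hence `‖V(T) - I‖ ≤ 2 K³ T sup ‖S‖`. The theorem follows from
`U₁ U₁† U₂ - U₁ = U₁ (V(T) - I) + i U₁ U₁† S(T) U₂`.
-/

open Complex Set

lemma hasDerivWithinAt_intervalIntegral_of_continuousOn {E : Type*} [NormedAddCommGroup E]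
    [NormedSpace ℝ E] [CompleteSpace E] {f : ℝ → E} {a b t : ℝ}
    (hf : ContinuousOn f (Icc a b)) (ht : t ∈ Icc a b) :
    HasDerivWithinAt (fun u => ∫ x in a..u, f x) (f t) (Icc a b) t := by
  have : Fact (t ∈ Icc a b) := ⟨ht⟩
  exact intervalIntegral.integral_hasDerivWithinAt_right
    (hf.mono (uIcc_subset_Icc (left_mem_Icc.2 (ht.1.trans ht.2)) ht)).intervalIntegrable
    (hf.stronglyMeasurableAtFilter_nhdsWithin measurableSet_Icc t) (hf t ht)

lemma IsCompact.le_ciSup_of_continuousOn {α : Type*} [TopologicalSpace α] {g : α → ℝ}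
    {s : Set α} (hs : IsCompact s) (hg : ContinuousOn g s) {x : α} (hx : x ∈ s) :
    g x ≤ ⨆ y : s, g y :=
  le_ciSup (f := fun y : s => g y)
    (by simpa only [image_eq_range] using hs.bddAbove_image hg) ⟨x, hx⟩

section Evolution

variable {A : Type*} [NormedRing A] [NormedAlgebra ℂ A] [StarRing A] [StarModule ℂ A]
  [NormedStarGroup A]

lemma HasDerivWithinAt.star_of_neg_I_smul_mul {U H : ℝ → A} {s : Set ℝ} {t : ℝ}
    (hU : HasDerivWithinAt U ((-I) • (H t * U t)) s t) :
    HasDerivWithinAt (fun t => star (U t)) (I • (star (U t) * star (H t))) s t := by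
  simpa only [star_smul, star_neg, star_mul, Complex.star_def, conj_I, neg_neg] using hU.star

def correctedOverlap (U₁ U₂ S : ℝ → A) (t : ℝ) : A :=
  star (U₁ t) * U₂ t - I • (star (U₁ t) * S t * U₂ t)

lemma hasDerivWithinAt_correctedOverlap {U₁ U₂ H₁ H₂ S : ℝ → A} {s : Set ℝ} {t : ℝ}
    (hU₁ : HasDerivWithinAt U₁ ((-I) • (H₁ t * U₁ t)) s t)
    (hU₂ : HasDerivWithinAt U₂ ((-I) • (H₂ t * U₂ t)) s t)
    (hS : HasDerivWithinAt S (star (H₁ t) - H₂ t) s t) :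
    HasDerivWithinAt (correctedOverlap U₁ U₂ S)
      (star (U₁ t) * (star (H₁ t) * S t - S t * H₂ t) * U₂ t) s t := by
  have hU₁' := hU₁.star_of_neg_I_smul_mul
  refine ((hU₁'.mul hU₂).sub (((hU₁'.mul hS).mul hU₂).const_smul I)).congr_deriv ?_
  simp only [smul_smul, smul_mul_assoc, mul_smul_comm, smul_sub, smul_add, add_mul,
    sub_mul, mul_sub, mul_assoc, I_mul_I, Pi.mul_apply]
  match_scalars <;> simp

theorem norm_mul_star_mul_sub_le {U₁ U₂ H₁ H₂ S : ℝ → A} {K M T : ℝ} (hT : 0 ≤ T)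
    (hU₁0 : U₁ 0 = 1) (hU₂0 : U₂ 0 = 1) (hS0 : S 0 = 0)
    (hU₁ : ∀ t ∈ Icc 0 T, HasDerivWithinAt U₁ ((-I) • (H₁ t * U₁ t)) (Icc 0 T) t)
    (hU₂ : ∀ t ∈ Icc 0 T, HasDerivWithinAt U₂ ((-I) • (H₂ t * U₂ t)) (Icc 0 T) t)
    (hS : ∀ t ∈ Icc 0 T, HasDerivWithinAt S (star (H₁ t) - H₂ t) (Icc 0 T) t)
    (hU₁K : ∀ t ∈ Icc 0 T, ‖U₁ t‖ ≤ K) (hU₂K : ∀ t ∈ Icc 0 T, ‖U₂ t‖ ≤ K)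
    (hH₁K : ∀ t ∈ Icc 0 T, ‖H₁ t‖ ≤ K) (hH₂K : ∀ t ∈ Icc 0 T, ‖H₂ t‖ ≤ K)
    (hSM : ∀ t ∈ Icc 0 T, ‖S t‖ ≤ M) :
    ‖U₁ T * star (U₁ T) * U₂ T - U₁ T‖ ≤ (2 * K ^ 4 * T + K ^ 3) * M := by
  set V := correctedOverlap U₁ U₂ S
  have h0 : (0 : ℝ) ∈ Icc 0 T := left_mem_Icc.2 hT
  have hTT : T ∈ Icc 0 T := right_mem_Icc.2 hT
  have hV' : ∀ t ∈ Icc 0 T,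
      ‖star (U₁ t) * (star (H₁ t) * S t - S t * H₂ t) * U₂ t‖ ≤ 2 * K ^ 3 * M := by
    intro t ht
    have hU₁t : ‖star (U₁ t)‖ ≤ K := (norm_star _).trans_le (hU₁K t ht)
    have hH₁t : ‖star (H₁ t)‖ ≤ K := (norm_star _).trans_le (hH₁K t ht)
    have hcomm : ‖star (H₁ t) * S t - S t * H₂ t‖ ≤ K * M + M * K :=
      norm_sub_le_of_le (norm_mul_le_of_le hH₁t (hSM t ht))
        (norm_mul_le_of_le (hSM t ht) (hH₂K t ht))
    calc _ ≤ K * (K * M + M * K) * K := norm_mul_le_of_le (norm_mul_le_of_le hU₁t hcomm) (hU₂K t ht)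
      _ = 2 * K ^ 3 * M := by ring
  have hVT : ‖V T - V 0‖ ≤ 2 * K ^ 3 * M * T := by
    simpa [abs_of_nonneg hT] using (convex_Icc 0 T).norm_image_sub_le_of_norm_hasDerivWithin_le
      (fun t ht => hasDerivWithinAt_correctedOverlap (hU₁ t ht) (hU₂ t ht) (hS t ht)) hV' h0 hTT
  have hV0 : V 0 = 1 := by simp [V, correctedOverlap, hU₁0, hU₂0, hS0]
  have hsplit : U₁ T * star (U₁ T) * U₂ T - U₁ T
      = U₁ T * (V T - V 0) + I • (U₁ T * star (U₁ T) * S T * U₂ T) := by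
    simp only [hV0, V, correctedOverlap, mul_sub, mul_one, mul_smul_comm, mul_assoc]
    abel
  have hremainder : ‖I • (U₁ T * star (U₁ T) * S T * U₂ T)‖ ≤ K * K * M * K := by
    rw [norm_smul, norm_I, one_mul]
    exact norm_mul_le_of_le (norm_mul_le_of_le (norm_mul_le_of_le (hU₁K T hTT)
      ((norm_star _).trans_le (hU₁K T hTT))) (hSM T hTT)) (hU₂K T hTT)
  calc _ ≤ ‖U₁ T * (V T - V 0)‖ + ‖I • (U₁ T * star (U₁ T) * S T * U₂ T)‖ := by
        rw [hsplit]; exact norm_add_le _ _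
    _ ≤ K * (2 * K ^ 3 * M * T) + K * K * M * K :=
        add_le_add (norm_mul_le_of_le (hU₁K T hTT) hVT) hremainder
    _ = (2 * K ^ 4 * T + K ^ 3) * M := by ring

end Evolution

theorem evolution_comparison_bound_general (K T : ℝ) (hT : 0 ≤ T) :
    ∃ C : ℝ, ∀ (n : ℕ) (U₁ U₂ H₁ H₂ S : ℝ → Matrix (Fin n) (Fin n) ℂ),
      ContinuousOn H₁ (Set.Icc 0 T) → ContinuousOn H₂ (Set.Icc 0 T) →
      U₁ 0 = 1 → U₂ 0 = 1 →
      (∀ t ∈ Set.Icc (0 : ℝ) T,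
        HasDerivWithinAt U₁ ((-Complex.I) • (H₁ t * U₁ t)) (Set.Icc 0 T) t) →
      (∀ t ∈ Set.Icc (0 : ℝ) T,
        HasDerivWithinAt U₂ ((-Complex.I) • (H₂ t * U₂ t)) (Set.Icc 0 T) t) →
      (∀ t ∈ Set.Icc (0 : ℝ) T, ‖U₁ t‖ ≤ K) →
      (∀ t ∈ Set.Icc (0 : ℝ) T, ‖U₂ t‖ ≤ K) →
      (∀ t ∈ Set.Icc (0 : ℝ) T, ‖H₁ t‖ ≤ K) →
      (∀ t ∈ Set.Icc (0 : ℝ) T, ‖H₂ t‖ ≤ K) →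
      (∀ t : ℝ, S t = ∫ s in (0 : ℝ)..t, ((H₁ s)ᴴ - H₂ s)) →
      ‖U₁ T * (U₁ T)ᴴ * U₂ T - U₁ T‖ ≤ C * ⨆ t : Set.Icc (0 : ℝ) T, ‖S t.1‖ := by
  refine ⟨2 * K ^ 4 * T + K ^ 3,
    fun n U₁ U₂ H₁ H₂ S hH₁ hH₂ hU₁0 hU₂0 hU₁ hU₂ hU₁K hU₂K hH₁K hH₂K hS => ?_⟩
  have hS' : ∀ t ∈ Icc 0 T, HasDerivWithinAt S (star (H₁ t) - H₂ t) (Icc 0 T) t := by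
    rw [funext hS]
    exact fun t => hasDerivWithinAt_intervalIntegral_of_continuousOn (hH₁.star.sub hH₂)
  have hSsup : ∀ t ∈ Icc 0 T, ‖S t‖ ≤ ⨆ t : Icc (0 : ℝ) T, ‖S t.1‖ :=
    fun t => isCompact_Icc.le_ciSup_of_continuousOn
      (fun t ht => (hS' t ht).continuousWithinAt.norm)
  exact norm_mul_star_mul_sub_le hT hU₁0 hU₂0 (by simp [hS]) hU₁ hU₂ hS' hU₁K hU₂K hH₁K hH₂K hSsup

/-- Comparison bound for two evolutions: with `S(t) = ∫_0^t (H₁(s)† − H₂(s)) ds`,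
`‖U₁(T)U₁(T)†U₂(T) − U₁(T)‖ ≤ C · sup_{t∈[0,T]} ‖S(t)‖`, where `C` depends only on
`K` and `T`. -/
theorem evolution_comparison_bound (K T : ℝ) (hK : 0 < K) (hT : 0 ≤ T) :
    ∃ C : ℝ, ∀ (n : ℕ) (U₁ U₂ H₁ H₂ S : ℝ → Matrix (Fin n) (Fin n) ℂ),
      ContinuousOn H₁ (Set.Icc 0 T) → ContinuousOn H₂ (Set.Icc 0 T) →
      U₁ 0 = 1 → U₂ 0 = 1 →
      (∀ t ∈ Set.Icc (0 : ℝ) T,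
        HasDerivWithinAt U₁ ((-Complex.I) • (H₁ t * U₁ t)) (Set.Icc 0 T) t) →
      (∀ t ∈ Set.Icc (0 : ℝ) T,
        HasDerivWithinAt U₂ ((-Complex.I) • (H₂ t * U₂ t)) (Set.Icc 0 T) t) →
      (∀ t ∈ Set.Icc (0 : ℝ) T, ‖U₁ t‖ ≤ K) →
      (∀ t ∈ Set.Icc (0 : ℝ) T, ‖U₂ t‖ ≤ K) →
      (∀ t ∈ Set.Icc (0 : ℝ) T, ‖H₁ t‖ ≤ K) →
      (∀ t ∈ Set.Icc (0 : ℝ) T, ‖H₂ t‖ ≤ K) →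
      (∀ t : ℝ, S t = ∫ s in (0 : ℝ)..t, ((H₁ s)ᴴ - H₂ s)) →
      ‖U₁ T * (U₁ T)ᴴ * U₂ T - U₁ T‖ ≤ C * ⨆ t : Set.Icc (0 : ℝ) T, ‖S t.1‖ :=
  evolution_comparison_bound_general K T hT
end
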